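/- arXiv:2605.28550 — 2 statements merged into one kernel-verified Lean document; each statement's English description precedes it below -/
import Mathlib

section
/- Let à ∈ ℝ^{n×n} be nonnegative and nilpotent, x̄ ∈ ℝ^n and ū ∈ ℝ^n entrywise positive, and let K ∈ ℝ^{n×n} be nonnegative. Then there exists λ ∈ (0,1]^n with Λ = diag(λ) satisfying both K Λ x̄ ≤ ū and à Λ x̄ ≤ Λ x̄. -/
open Matrix

theorem stmt_11 (n : ℕ) (Atil K : Matrix (Fin n) (Fin n) ℝ) (xbar ubar : Fin n → ℝ)
    (hAtil : ∀ i j, 0 ≤ Atil i j) (hnil : IsNilpotent Atil)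
    (hxbar : ∀ i, 0 < xbar i) (hubar : ∀ i, 0 < ubar i)
    (hK : ∀ i j, 0 ≤ K i j) :
    ∃ lam : Fin n → ℝ, (∀ i, 0 < lam i ∧ lam i ≤ 1) ∧
      (∀ i, ((K * Matrix.diagonal lam) *ᵥ xbar) i ≤ ubar i) ∧
      (∀ i, ((Atil * Matrix.diagonal lam) *ᵥ xbar) i ≤ (Matrix.diagonal lam *ᵥ xbar) i) := by
  rcases Nat.eq_zero_or_pos n with hn | hn
  · subst hn
    exact ⟨fun _ => 1, fun i => i.elim0, fun i => i.elim0, fun i => i.elim0⟩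
  have hne : (Finset.univ : Finset (Fin n)).Nonempty := ⟨⟨0, hn⟩, Finset.mem_univ _⟩
  obtain ⟨k, hk⟩ := hnil
  -- nonnegativity of powers
  have hpow : ∀ m : ℕ, ∀ i j, 0 ≤ (Atil ^ m) i j := by
    intro m
    induction m with
    | zero => intro i j; by_cases h : i = j <;> simp [Matrix.one_apply, h]
    | succ m ih =>
      intro i j
      rw [pow_succ, Matrix.mul_apply]
      exact Finset.sum_nonneg fun l _ => mul_nonneg (ih i l) (hAtil l j)
  set g : ℕ → Fin n → ℝ := fun m => (Atil ^ m) *ᵥ (fun _ => 1) with hg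
  have hterm : ∀ m i, 0 ≤ g m i := by
    intro m i
    simp only [hg, Matrix.mulVec, dotProduct, mul_one]
    exact Finset.sum_nonneg fun j _ => hpow m i j
  set v : Fin n → ℝ := fun i => ∑ m ∈ Finset.range (k + 1), g m i with hv
  have hv1 : ∀ i, 1 ≤ v i := by
    intro i
    have h0 : g 0 i = 1 := by simp [hg, Matrix.mulVec, dotProduct, Matrix.one_apply]
    calc (1 : ℝ) = g 0 i := h0.symm
    _ ≤ v i := Finset.single_le_sum (f := fun m => g m i)
        (fun m _ => hterm m i) (Finset.mem_range.mpr (Nat.succ_pos k))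
  have hvpos : ∀ i, 0 < v i := fun i => lt_of_lt_of_le one_pos (hv1 i)
  -- Atil *ᵥ v ≤ v
  have hAv : ∀ i, (Atil *ᵥ v) i ≤ v i := by
    intro i
    have step : (Atil *ᵥ v) i = ∑ m ∈ Finset.range (k + 1), g (m + 1) i := by
      have : ∀ m, (Atil *ᵥ g m) = g (m + 1) := by
        intro m
        rw [hg]
        rw [Matrix.mulVec_mulVec, ← pow_succ']
      calc (Atil *ᵥ v) i = ∑ j, Atil i j * ∑ m ∈ Finset.range (k + 1), g m j := rfl
      _ = ∑ j, ∑ m ∈ Finset.range (k + 1), Atil i j * g m j := by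
          simp [Finset.mul_sum]
      _ = ∑ m ∈ Finset.range (k + 1), ∑ j, Atil i j * g m j := Finset.sum_comm
      _ = ∑ m ∈ Finset.range (k + 1), (Atil *ᵥ g m) i := rfl
      _ = ∑ m ∈ Finset.range (k + 1), g (m + 1) i := by
          exact Finset.sum_congr rfl fun m _ => by rw [this m]
    have hlast : g (k + 1) i = 0 := by
      simp [hg, pow_succ, hk]
    rw [step, Finset.sum_range_succ, hlast, add_zero]
    have hsub : ∑ m ∈ Finset.range k, g (m + 1) i
        = ∑ m ∈ Finset.Ico 1 (k + 1), g m i := by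
      rw [Finset.sum_Ico_eq_sum_range]
      simp [add_comm]
    rw [hsub]
    apply Finset.sum_le_sum_of_subset_of_nonneg
    · intro x hx
      simp only [Finset.mem_Ico] at hx
      exact Finset.mem_range.mpr hx.2
    · intro m _ _; exact hterm m i
  -- choose alpha
  set Kv : Fin n → ℝ := K *ᵥ v with hKv
  have hKv0 : ∀ i, 0 ≤ Kv i := by
    intro i
    simp only [hKv, Matrix.mulVec, dotProduct]
    exact Finset.sum_nonneg fun j _ => mul_nonneg (hK i j) (le_of_lt (hvpos j))
  set f : Fin n → ℝ := fun i => min (xbar i / v i) (ubar i / (Kv i + 1)) with hf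
  have hfpos : ∀ i, 0 < f i := by
    intro i
    exact lt_min (div_pos (hxbar i) (hvpos i))
      (div_pos (hubar i) (by linarith [hKv0 i]))
  set α : ℝ := min 1 (Finset.univ.inf' hne f) with hα
  have hαpos : 0 < α := by
    apply lt_min one_pos
    rw [Finset.lt_inf'_iff]
    exact fun i _ => hfpos i
  have hαle : ∀ i, α ≤ f i := fun i =>
    le_trans (min_le_right _ _) (Finset.inf'_le f (Finset.mem_univ i))
  refine ⟨fun i => α * v i / xbar i, ?_, ?_, ?_⟩
  · intro i
    constructor
    · exact div_pos (mul_pos hαpos (hvpos i)) (hxbar i)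
    · rw [div_le_one (hxbar i)]
      have h1 : α ≤ xbar i / v i := le_trans (hαle i) (min_le_left _ _)
      calc α * v i ≤ (xbar i / v i) * v i :=
            mul_le_mul_of_nonneg_right h1 (le_of_lt (hvpos i))
      _ = xbar i := div_mul_cancel₀ (xbar i) (ne_of_gt (hvpos i))
  all_goals
    have hdiag : Matrix.diagonal (fun i => α * v i / xbar i) *ᵥ xbar
        = fun i => α * v i := by
      funext i
      rw [Matrix.mulVec_diagonal]
      exact div_mul_cancel₀ _ (ne_of_gt (hxbar i))
  · intro i
    rw [← Matrix.mulVec_mulVec, hdiag]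
    have : (K *ᵥ fun i => α * v i) i = α * Kv i := by
      simp [Matrix.mulVec, dotProduct, hKv, Finset.mul_sum]
      exact Finset.sum_congr rfl fun j _ => by ring
    rw [this]
    have h2 : α ≤ ubar i / (Kv i + 1) := le_trans (hαle i) (min_le_right _ _)
    have : α * (Kv i + 1) ≤ ubar i := by
      rw [← le_div_iff₀ (by linarith [hKv0 i])]
      exact h2
    nlinarith [hKv0 i, hαpos]
  · intro i
    rw [← Matrix.mulVec_mulVec, hdiag]
    have : (Atil *ᵥ fun i => α * v i) i = α * (Atil *ᵥ v) i := by
      simp [Matrix.mulVec, dotProduct, Finset.mul_sum]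
      exact Finset.sum_congr rfl fun j _ => by ring
    rw [this]
    simpa using mul_le_mul_of_nonneg_left (hAv i) (le_of_lt hαpos)
end

section
/- Let γ > 1 and define α_N = 1 - (γ-1)^N / (γ^{N-1} - (γ-1)^{N-1}) for integers N ≥ 2. If N > 2 + ln(γ-1)/(ln γ - ln(γ-1)), then 0 < α_N < 1. -/
theorem stmt_14 (γ : ℝ) (hγ : 1 < γ) (N : ℕ) (hN2 : 2 ≤ N)
    (hN : (N : ℝ) > 2 + Real.log (γ - 1) / (Real.log γ - Real.log (γ - 1))) :
    0 < 1 - (γ - 1) ^ N / (γ ^ (N - 1) - (γ - 1) ^ (N - 1)) ∧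
      1 - (γ - 1) ^ N / (γ ^ (N - 1) - (γ - 1) ^ (N - 1)) < 1 := by
  set b := γ - 1 with hb
  have hb0 : (0:ℝ) < b := by by_contra h; simp [hb] at h; linarith
  have hγ0 : (0:ℝ) < γ := by linarith
  have hbγ : b < γ := by simp [hb]
  have hd : 0 < Real.log γ - Real.log b := by
    have := Real.log_lt_log hb0 hbγ; linarith
  have h1 : Real.log b < ((N:ℝ) - 2) * (Real.log γ - Real.log b) := by
    have h2 : Real.log b / (Real.log γ - Real.log b) < (N:ℝ) - 2 := by linarith
    exact (div_lt_iff₀ hd).mp h2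
  have hcast : ((N - 1 : ℕ) : ℝ) = (N:ℝ) - 1 := by
    have h1 : (1:ℕ) ≤ N := by omega
    push_cast [Nat.cast_sub h1]; ring
  have hkey : γ * b ^ (N - 1) < γ ^ (N - 1) := by
    have hlt : Real.log (γ * b ^ (N - 1)) < Real.log (γ ^ (N - 1)) := by
      rw [Real.log_mul (ne_of_gt hγ0) (by positivity), Real.log_pow, Real.log_pow, hcast]
      nlinarith
    have := Real.exp_lt_exp.mpr hlt
    rwa [Real.exp_log (by positivity), Real.exp_log (by positivity)] at this
  have hbpow : 0 < b ^ (N - 1) := by positivity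
  have hNsucc : N = (N - 1) + 1 := by omega
  have hbN : b ^ N = b ^ (N - 1) * b := by conv_lhs => rw [hNsucc, pow_succ]
  have hdenom : 0 < γ ^ (N - 1) - b ^ (N - 1) := by
    have : b ^ (N - 1) < γ ^ (N - 1) := by nlinarith
    linarith
  have hnum : b ^ N < γ ^ (N - 1) - b ^ (N - 1) := by
    rw [hbN]; simp only [hb]; nlinarith
  constructor
  · have := (div_lt_one hdenom).mpr hnum
    linarith
  · have : 0 < b ^ N / (γ ^ (N - 1) - b ^ (N - 1)) := by positivity
    linarith
end
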